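/- arXiv:1907.10049 — 2 statements merged into one kernel-verified Lean document; each statement's English description precedes it below -/
import Mathlib

section
/- Sampling duality between the Cannings frequency process and the Cannings ancestral selection process: for every g ≥ 0 and k, n ∈ {1,…,N}, if 𝒥_n is a uniformly chosen subset of {1,…,N} of size n, and if, given A_g = a, 𝒜_g is a uniformly chosen subset of {1,…,N} of size a, then P(𝒥_n ⊆ {1,…,K_g} | K_0 = k) = P(𝒜_g ⊆ {1,…,k} | A_0 = n). Equivalently, E[ K_g(K_g−1)⋯(K_g−n+1) / (N(N−1)⋯(N−n+1)) | K_0 = k ] = E[ k(k−1)⋯(k−A_g+1) / (N(N−1)⋯(N−A_g+1)) | A_0 = n ]. -/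
open MeasureTheory Filter Finset Topology

noncomputable section

/-- The paintbox condition: `μ` is the law of an exchangeable random vector of
probability weights `(W_1, …, W_N)` (indexed by `0, …, N-1`, padded by zeros). -/
def IsWeights (N : ℕ) (μ : Measure (ℕ → ℝ)) : Prop :=
  IsProbabilityMeasure μ ∧
  (∀ᵐ w ∂μ, (∀ i, 0 ≤ w i) ∧ (∀ i, N ≤ i → w i = 0) ∧
    ∑ i ∈ Finset.range N, w i = 1) ∧
  (∀ σ : Equiv.Perm ℕ, (∀ i, N ≤ i → σ i = i) →
    Measure.map (fun w => w ∘ σ) μ = μ)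

/-- The (conditional on the weights) success probability `P(k, 𝒲)` for the mixed
binomial transition of the Cannings frequency process. -/
def selProb (N : ℕ) (s : ℝ) (k : ℕ) (w : ℕ → ℝ) : ℝ :=
  ((1 - s) * ∑ i ∈ Finset.range k, w i) /
    ((1 - s) * ∑ i ∈ Finset.range k, w i + ∑ i ∈ Finset.Ico k N, w i)

/-- One-step transition probability of the Cannings frequency process with selection:
given `K_{g-1} = k`, `K_g` is mixed binomial with parameters `N` and `P(k,𝒲)`. -/
def canningsStep (N : ℕ) (s : ℝ) (μ : Measure (ℕ → ℝ)) (k j : ℕ) : ℝ :=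
  ∫ w, (N.choose j : ℝ) * selProb N s k w ^ j * (1 - selProb N s k w) ^ (N - j) ∂μ

/-- `canningsProb N s μ g k j = P(K_g = j | K_0 = k)`. -/
def canningsProb (N : ℕ) (s : ℝ) (μ : Measure (ℕ → ℝ)) : ℕ → ℕ → ℕ → ℝ
  | 0, k, j => if j = k then 1 else 0
  | g + 1, k, j => ∑ i ∈ Finset.range (N + 1),
      canningsProb N s μ g k i * canningsStep N s μ i j

/-- Law of the sum of `a` independent Geometric(1-s) random variables (trials up to
and including the first success): `negbinom s a h = P(G^{(1)} + ⋯ + G^{(a)} = h)`. -/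
def negbinom (s : ℝ) (a h : ℕ) : ℝ :=
  if a ≤ h then ((h - 1).choose (a - 1) : ℝ) * (1 - s) ^ a * s ^ (h - a) else 0

/-- Probability (given the weights `w`) that exactly `j` boxes are occupied when
`h` balls are placed independently into `N` boxes, ball into box `i` w.p. `w i`
(inclusion–exclusion formula). -/
def occupancy (N : ℕ) (w : ℕ → ℝ) (h j : ℕ) : ℝ :=
  ∑ S ∈ (Finset.range N).powersetCard j, ∑ T ∈ S.powerset,
    (-1 : ℝ) ^ (j - T.card) * (∑ i ∈ T, w i) ^ h

/-- One-step transition probability of the Cannings ancestral selection process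
(CASP): branching (negative binomial) followed by coalescence (balls in boxes). -/
def caspStep (N : ℕ) (s : ℝ) (μ : Measure (ℕ → ℝ)) (a j : ℕ) : ℝ :=
  ∑' h : ℕ, negbinom s a h * ∫ w, occupancy N w h j ∂μ

/-- `caspProb N s μ m a j = P(A_m = j | A_0 = a)`. -/
def caspProb (N : ℕ) (s : ℝ) (μ : Measure (ℕ → ℝ)) : ℕ → ℕ → ℕ → ℝ
  | 0, a, j => if j = a then 1 else 0
  | m + 1, a, j => ∑ i ∈ Finset.range (N + 1),
      caspProb N s μ m a i * caspStep N s μ i j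

/-- The exponent `b_N = - ln s_N / ln N`, so that `s_N = N^{-b_N}`. -/
def bexp (s : ℕ → ℝ) (N : ℕ) : ℝ := - Real.log (s N) / Real.log N

/-- `A` is (a realization on `(Ω, P)` of) the Cannings ancestral selection process
with parameters `N`, `ℒ(𝒲) = μ`, `s`, started at `a0`: its finite-dimensional
distributions are the Markovian ones with one-step transitions `caspStep`. -/
def IsCASPProcess (N : ℕ) (s : ℝ) (μ : Measure (ℕ → ℝ)) {Ω : Type}
    [MeasurableSpace Ω] (P : Measure Ω) (A : ℕ → Ω → ℕ) (a0 : ℕ) : Prop :=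
  IsProbabilityMeasure P ∧
  ∀ (m : ℕ) (a : ℕ → ℕ),
    (P {ω | ∀ i ≤ m, A i ω = a i}).toReal =
      (if a 0 = a0 then 1 else 0) *
        ∏ i ∈ Finset.range m, caspStep N s μ (a i) (a (i + 1))

/-- Upward jump rate of the Moran ancestral selection process. -/
def maspUp (N : ℕ) (s : ℝ) (k : ℕ) : ℝ := k * s * ((N : ℝ) - k) / N

/-- Downward jump rate of the Moran ancestral selection process. -/
def maspDown (N : ℕ) (ρ2 : ℝ) (k : ℕ) : ℝ := ρ2 / N * (k.choose 2 : ℝ)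

/-- Total jump rate of the MASP. -/
def maspRate (N : ℕ) (ρ2 s : ℝ) (k : ℕ) : ℝ := maspUp N s k + maspDown N ρ2 k

/-- Transition matrix of the embedded jump chain of the MASP. -/
def maspJump (N : ℕ) (ρ2 s : ℝ) (k j : ℕ) : ℝ :=
  if j = k + 1 then maspUp N s k / maspRate N ρ2 s k
  else if j + 1 = k then maspDown N ρ2 k / maspRate N ρ2 s k
  else 0

/-- `(J, E)` is the jump-hold description of the Moran ancestral selection process
with parameters `N`, `ρ2`, `s`, started at `n0`: `J` is the embedded jump chain,
and conditionally on it the holding times `E i` are independent exponentials with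
the state-dependent total rates. -/
def IsMASP (N : ℕ) (ρ2 s : ℝ) {Ω : Type} [MeasurableSpace Ω] (P : Measure Ω)
    (J : ℕ → Ω → ℕ) (E : ℕ → Ω → ℝ) (n0 : ℕ) : Prop :=
  IsProbabilityMeasure P ∧
  ∀ (m : ℕ) (a : ℕ → ℕ) (t : ℕ → ℝ), (∀ i, 0 ≤ t i) →
    (P {ω | (∀ i ≤ m, J i ω = a i) ∧ (∀ i ≤ m, t i ≤ E i ω)}).toReal =
      (if a 0 = n0 then 1 else 0)
        * (∏ i ∈ Finset.range m, maspJump N ρ2 s (a i) (a (i + 1)))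
        * ∏ i ∈ Finset.range (m + 1), Real.exp (-(maspRate N ρ2 s (a i)) * t i)

/-- The value `B_r` of the MASP at time `r`, read off from the jump-hold data. -/
def maspVal {Ω : Type} (J : ℕ → Ω → ℕ) (E : ℕ → Ω → ℝ) (r : ℝ) (ω : Ω) : ℕ :=
  J (sSup {i : ℕ | ∑ l ∈ Finset.range i, E l ω ≤ r}) ω


/-!
For one generation write `W = W_1 + ⋯ + W_k`. Given `𝒲`, `K_1` is binomial, so the sampling
probability `E[(K_1)_n / (N)_n]` equals `E[P(k, 𝒲) ^ n]`; expanding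
`P(k, 𝒲) ^ n = ((1 - s) W / (1 - s W)) ^ n` as the generating function of
`H = G^{(1)} + ⋯ + G^{(n)}` turns it into `E[W ^ H]`, the probability that all `H` balls land in
the boxes `1, …, k`. On the CASP side, exchangeability makes the inclusion–exclusion formula for
the occupancy law average to binomial coefficients times the moments `E[(W_1 + ⋯ + W_t) ^ h]`, and
binomial inversion turns `E[(k)_{A_1} / (N)_{A_1}]` into the same `E[W ^ H]`. This one-step
duality of the transition kernels iterates to every `g`, because the CASP started at `n ≥ 1` never
visits `0`.
-/

def kernelIter (N : ℕ) (M : ℕ → ℕ → ℝ) : ℕ → ℕ → ℕ → ℝ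
  | 0, k, j => if j = k then 1 else 0
  | g + 1, k, j => ∑ i ∈ range (N + 1), kernelIter N M g k i * M i j

lemma canningsProb_eq_kernelIter (N : ℕ) (s : ℝ) (μ : Measure (ℕ → ℝ)) :
    canningsProb N s μ = kernelIter N (canningsStep N s μ) := by
  ext g k j
  induction g generalizing j with
  | zero => rfl
  | succ g ih => simp only [canningsProb, kernelIter, ih]

lemma caspProb_eq_kernelIter (N : ℕ) (s : ℝ) (μ : Measure (ℕ → ℝ)) :
    caspProb N s μ = kernelIter N (caspStep N s μ) := by
  ext g k j
  induction g generalizing j with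
  | zero => rfl
  | succ g ih => simp only [caspProb, kernelIter, ih]

section KernelIter

variable {N : ℕ}

lemma kernelIter_succ' (M : ℕ → ℕ → ℝ) (g : ℕ) {k j : ℕ} (hk : k ≤ N) (hj : j ≤ N) :
    kernelIter N M (g + 1) k j = ∑ i ∈ range (N + 1), M k i * kernelIter N M g i j := by
  induction g generalizing j with
  | zero => simp [kernelIter, hk, hj]
  | succ g ih =>
    rw [kernelIter]
    calc ∑ i ∈ range (N + 1), kernelIter N M (g + 1) k i * M i j
        = ∑ i ∈ range (N + 1), (∑ l ∈ range (N + 1), M k l * kernelIter N M g l i) * M i j :=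
          sum_congr rfl fun i hi => by rw [ih (mem_range_succ_iff.mp hi)]
      _ = ∑ l ∈ range (N + 1), M k l * kernelIter N M (g + 1) l j := by
          simp only [kernelIter, sum_mul, mul_sum, mul_assoc]
          exact sum_comm

theorem kernelIter_duality {P Q D : ℕ → ℕ → ℝ} {S : Set ℕ} (hSN : ∀ n ∈ S, n ≤ N)
    (hQS : ∀ n ∈ S, ∀ a ≤ N, a ∉ S → Q n a = 0)
    (hPQ : ∀ k ≤ N, ∀ n ∈ S,
      ∑ j ∈ range (N + 1), P k j * D j n = ∑ a ∈ range (N + 1), Q n a * D k a)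
    (g : ℕ) {k n : ℕ} (hk : k ≤ N) (hn : n ∈ S) :
    ∑ j ∈ range (N + 1), kernelIter N P g k j * D j n =
      ∑ a ∈ range (N + 1), kernelIter N Q g n a * D k a := by
  induction g generalizing n with
  | zero => simp [kernelIter, hk, hSN n hn]
  | succ g ih =>
    calc ∑ j ∈ range (N + 1), kernelIter N P (g + 1) k j * D j n
        = ∑ i ∈ range (N + 1), kernelIter N P g k i * ∑ j ∈ range (N + 1), P i j * D j n := by
          simp only [kernelIter, sum_mul, mul_sum, mul_assoc]
          exact sum_comm
      _ = ∑ i ∈ range (N + 1), kernelIter N P g k i * ∑ a ∈ range (N + 1), Q n a * D i a :=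
          sum_congr rfl fun i hi => by rw [hPQ i (mem_range_succ_iff.mp hi) n hn]
      _ = ∑ a ∈ range (N + 1), Q n a * ∑ i ∈ range (N + 1), kernelIter N P g k i * D i a := by
          simp only [mul_sum, mul_left_comm (Q _ _)]
          exact sum_comm
      _ = ∑ a ∈ range (N + 1), Q n a * ∑ b ∈ range (N + 1), kernelIter N Q g a b * D k b := by
          refine sum_congr rfl fun a ha => ?_
          by_cases haS : a ∈ S
          · rw [ih haS]
          · rw [hQS n hn a (mem_range_succ_iff.mp ha) haS, zero_mul, zero_mul]
      _ = ∑ b ∈ range (N + 1), kernelIter N Q (g + 1) n b * D k b := by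
          symm
          rw [sum_congr rfl fun b hb => by
            rw [kernelIter_succ' Q g (hSN n hn) (mem_range_succ_iff.mp hb)]]
          simp only [mul_sum, sum_mul, mul_assoc]
          exact sum_comm

end KernelIter

section Combinatorics

lemma choose_mul_descFactorial_add (N n i : ℕ) :
    N.choose (n + i) * (n + i).descFactorial n = N.descFactorial n * (N - n).choose i := by
  rw [Nat.descFactorial_eq_factorial_mul_choose, Nat.descFactorial_eq_factorial_mul_choose,
    mul_left_comm, Nat.choose_mul (Nat.le_add_right n i), Nat.add_sub_cancel_left, mul_assoc]

theorem sum_range_choose_mul_descFactorial_mul_pow {R : Type*} [CommSemiring R] (x y : R)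
    {n N : ℕ} (hn : n ≤ N) :
    ∑ j ∈ range (N + 1), (N.choose j * j.descFactorial n : R) * x ^ j * y ^ (N - j) =
      N.descFactorial n * x ^ n * (x + y) ^ (N - n) := by
  rw [show N + 1 = n + (N - n + 1) by omega, sum_range_add, add_pow,
    sum_eq_zero fun j hj => by
      rw [Nat.descFactorial_eq_zero_iff_lt.mpr (mem_range.mp hj)]; simp,
    zero_add, mul_sum]
  refine sum_congr rfl fun i hi => ?_
  rw [show N - (n + i) = N - n - i by omega, ← Nat.cast_mul, choose_mul_descFactorial_add,
    Nat.cast_mul, pow_add]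
  ring

lemma sum_range_neg_one_pow_mul_choose {R : Type*} [CommRing R] (m : ℕ) :
    ∑ i ∈ range (m + 1), (-1 : R) ^ i * m.choose i = if m = 0 then 1 else 0 := by
  simpa [← zero_pow_eq] using (add_pow (-1 : R) 1 m).symm

/-- Binomial inversion. -/
theorem sum_choose_mul_sum_neg_one_pow_mul_choose {R : Type*} [CommRing R] (f : ℕ → R)
    {k K : ℕ} (hk : k ≤ K) :
    ∑ a ∈ range (K + 1), (k.choose a : R) *
      ∑ t ∈ range (a + 1), (-1) ^ (a - t) * a.choose t * f t = f k := by
  rw [← sum_subset (range_subset_range.mpr (Nat.succ_le_succ hk)) fun a _ ha => by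
    rw [Nat.choose_eq_zero_of_lt (by simpa using ha), Nat.cast_zero, zero_mul]]
  simp_rw [mul_sum]
  rw [sum_comm' (t' := range (k + 1)) (s' := fun t => Ico t (k + 1)) fun a t => by
    simp only [mem_range, mem_Ico]; omega]
  rw [sum_eq_single_of_mem k (self_mem_range_succ k) fun t ht htk => ?_]
  · simp
  have htk' := mem_range.mp ht
  rw [sum_Ico_eq_sum_range, show k + 1 - t = k - t + 1 by omega]
  have hchoose : ∀ i, (k.choose (t + i) : R) * (t + i).choose t = k.choose t * (k - t).choose i :=
    fun i => by rw [← Nat.cast_mul, ← Nat.cast_mul, Nat.choose_mul (Nat.le_add_right t i),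
      Nat.add_sub_cancel_left]
  calc ∑ i ∈ range (k - t + 1), (k.choose (t + i) : R) *
        ((-1) ^ (t + i - t) * ((t + i).choose t) * f t)
      = k.choose t * f t * ∑ i ∈ range (k - t + 1), (-1 : R) ^ i * (k - t).choose i := by
        rw [mul_sum]
        refine sum_congr rfl fun i _ => ?_
        rw [Nat.add_sub_cancel_left]
        linear_combination (-1 : R) ^ i * f t * hchoose i
    _ = 0 := by rw [sum_range_neg_one_pow_mul_choose, if_neg (by omega), mul_zero]

end Combinatorics

section NegativeBinomial

lemma negbinom_nonneg {s : ℝ} (hs0 : 0 ≤ s) (hs1 : s ≤ 1) (a h : ℕ) : 0 ≤ negbinom s a h := by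
  unfold negbinom
  split_ifs
  · exact mul_nonneg (mul_nonneg (Nat.cast_nonneg _) (pow_nonneg (by linarith) _))
      (pow_nonneg hs0 _)
  · exact le_rfl

theorem hasSum_negbinom_mul_pow {s x : ℝ} (hsx : ‖s * x‖ < 1) {a : ℕ} (ha : 1 ≤ a) :
    HasSum (fun h => negbinom s a h * x ^ h) (((1 - s) * x / (1 - s * x)) ^ a) := by
  rw [← hasSum_nat_add_iff' a, sum_eq_zero fun h hh => by
    rw [negbinom, if_neg (by simpa using hh), zero_mul], sub_zero]
  have hgeom := (hasSum_choose_mul_geometric_of_norm_lt_one (a - 1) hsx).mul_left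
    (((1 - s) * x) ^ a)
  rw [Nat.sub_add_cancel ha] at hgeom
  convert hgeom using 1 <;> try rfl
  · ext m
    rw [negbinom, if_pos (Nat.le_add_left a m), Nat.add_sub_cancel,
      show m + a - 1 = m + (a - 1) by omega, mul_pow, mul_pow, pow_add]
    ring
  · rw [div_pow, div_eq_mul_one_div]

theorem hasSum_negbinom {s : ℝ} (hs : |s| < 1) {a : ℕ} (ha : 1 ≤ a) :
    HasSum (negbinom s a) 1 := by
  have hs1 : 1 - s ≠ 0 := by rw [abs_lt] at hs; linarith
  have h := hasSum_negbinom_mul_pow (x := 1) (by simpa using hs) ha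
  simp only [one_pow, mul_one] at h
  rwa [div_self hs1, one_pow] at h

end NegativeBinomial

lemma Equiv.Perm.exists_map_finset_eq_of_forall {α : Type*} (p : α → Prop) [DecidablePred p]
    {T T' : Finset α} (hT : ∀ x ∈ T, p x) (hT' : ∀ x ∈ T', p x) (hcard : T.card = T'.card) :
    ∃ σ : Equiv.Perm α, (∀ x, ¬p x → σ x = x) ∧ T.map σ.toEmbedding = T' := by
  obtain ⟨τ, hτ⟩ := Equiv.Perm.exists_map_finset_eq (T.subtype p) (T'.subtype p) (by
    rw [card_subtype, card_subtype, filter_true_of_mem hT, filter_true_of_mem hT', hcard])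
  refine ⟨Equiv.Perm.ofSubtype τ, fun x hx => Equiv.Perm.ofSubtype_apply_of_not_mem τ hx, ?_⟩
  rw [← subtype_map_of_mem hT, ← subtype_map_of_mem hT', ← hτ, Finset.map_map, Finset.map_map]
  congr 1
  ext x
  exact Equiv.Perm.ofSubtype_apply_coe τ x

/-- `E[(W_1 + ⋯ + W_t) ^ h]`: the probability that `h` balls all land in the first `t` boxes. -/
def blockMoment (μ : Measure (ℕ → ℝ)) (t h : ℕ) : ℝ := ∫ w, (∑ i ∈ range t, w i) ^ h ∂μ

/-- The probability that a uniform `n`-subset of `{1, …, N}` lies in `{1, …, j}`. -/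
def subsetProb (N j n : ℕ) : ℝ := (j.descFactorial n : ℝ) / (N.descFactorial n : ℝ)

lemma choose_mul_subsetProb {N a : ℕ} (k : ℕ) (ha : a ≤ N) :
    (N.choose a : ℝ) * subsetProb N k a = k.choose a := by
  have hN : (N.choose a : ℝ) ≠ 0 := Nat.cast_ne_zero.mpr (Nat.choose_pos ha).ne'
  rw [subsetProb, Nat.descFactorial_eq_factorial_mul_choose,
    Nat.descFactorial_eq_factorial_mul_choose]
  push_cast
  field_simp

lemma selProb_eq {N k : ℕ} {s : ℝ} {w : ℕ → ℝ} (hk : k ≤ N) (hw : ∑ i ∈ range N, w i = 1) :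
    selProb N s k w = (1 - s) * (∑ i ∈ range k, w i) / (1 - s * ∑ i ∈ range k, w i) := by
  rw [selProb, ← sum_range_add_sum_Ico w hk] at *
  congr 1
  linear_combination hw

lemma one_sub_mul_div_one_sub_mul_mem_Icc {s x : ℝ} (hs0 : 0 < s) (hs1 : s < 1) (hx0 : 0 ≤ x)
    (hx1 : x ≤ 1) :
    (1 - s) * x / (1 - s * x) ∈ Set.Icc 0 1 := by
  have hden : 0 < 1 - s * x := by nlinarith
  exact ⟨by positivity, (div_le_one hden).mpr (by nlinarith)⟩

lemma sum_choose_mul_pow_mul_subsetProb (p : ℝ) {n N : ℕ} (hn : n ≤ N) :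
    ∑ j ∈ range (N + 1), (N.choose j : ℝ) * p ^ j * (1 - p) ^ (N - j) * subsetProb N j n =
      p ^ n := by
  have hN : (N.descFactorial n : ℝ) ≠ 0 :=
    Nat.cast_ne_zero.mpr (Nat.descFactorial_eq_zero_iff_lt.not.mpr (not_lt.mpr hn))
  have hmoment := sum_range_choose_mul_descFactorial_mul_pow p (1 - p) hn
  rw [add_sub_cancel, one_pow, mul_one] at hmoment
  simp only [subsetProb, mul_div_assoc', ← sum_div]
  rw [div_eq_iff hN, mul_comm, ← hmoment]
  exact sum_congr rfl fun j _ => by ring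

lemma caspStep_zero_right (N : ℕ) (s : ℝ) (μ : Measure (ℕ → ℝ)) {n : ℕ} (hn : 1 ≤ n) :
    caspStep N s μ n 0 = 0 := by
  rw [caspStep]
  convert tsum_zero with h
  rcases h.eq_zero_or_pos with rfl | hh
  · rw [negbinom, if_neg (by omega), zero_mul]
  · simp [occupancy, zero_pow hh.ne']

namespace IsWeights

variable {N : ℕ} {μ : Measure (ℕ → ℝ)} {s : ℝ}

lemma ae_sum_mem_Icc (hw : IsWeights N μ) {T : Finset ℕ} (hT : T ⊆ range N) :
    ∀ᵐ w ∂μ, ∑ i ∈ T, w i ∈ Set.Icc 0 1 := by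
  filter_upwards [hw.2.1] with w ⟨hnonneg, _, hsum⟩
  exact ⟨sum_nonneg fun i _ => hnonneg i,
    hsum ▸ sum_le_sum_of_subset_of_nonneg hT fun i _ _ => hnonneg i⟩

lemma integrable_sum_pow (hw : IsWeights N μ) {T : Finset ℕ} (hT : T ⊆ range N) (h : ℕ) :
    Integrable (fun w => (∑ i ∈ T, w i) ^ h) μ := by
  have := hw.1
  refine .of_bound (by fun_prop) 1 ?_
  filter_upwards [hw.ae_sum_mem_Icc hT] with w ⟨h0, h1⟩
  rw [Real.norm_eq_abs, abs_of_nonneg (pow_nonneg h0 h)]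
  exact pow_le_one₀ h0 h1

lemma integral_comp_perm (hw : IsWeights N μ) {σ : Equiv.Perm ℕ} (hσ : ∀ i, N ≤ i → σ i = i)
    {G : (ℕ → ℝ) → ℝ} (hG : AEStronglyMeasurable G μ) :
    ∫ w, G (w ∘ σ) ∂μ = ∫ w, G w ∂μ := by
  rw [← hw.2.2 σ hσ] at hG
  rw [← integral_map (by fun_prop : Measurable fun w : ℕ → ℝ => w ∘ σ).aemeasurable hG,
    hw.2.2 σ hσ]

lemma integral_sum_pow (hw : IsWeights N μ) {T : Finset ℕ} (hT : T ⊆ range N) (h : ℕ) :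
    ∫ w, (∑ i ∈ T, w i) ^ h ∂μ = blockMoment μ T.card h := by
  obtain ⟨σ, hσ, hmap⟩ := Equiv.Perm.exists_map_finset_eq_of_forall (· < N)
    (T := range T.card) (fun i hi => (mem_range.mp hi).trans_le (by simpa using card_le_card hT))
    (fun i hi => mem_range.mp (hT hi)) (card_range _)
  conv_lhs => rw [← hmap]
  simp only [sum_map, Equiv.coe_toEmbedding]
  exact hw.integral_comp_perm (fun i hi => hσ i (not_lt.mpr hi))
    (G := fun w => (∑ i ∈ range T.card, w i) ^ h) (by fun_prop)

lemma integral_occupancy (hw : IsWeights N μ) (h a : ℕ) :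
    ∫ w, occupancy N w h a ∂μ =
      N.choose a * ∑ t ∈ range (a + 1), (-1) ^ (a - t) * a.choose t * blockMoment μ t h := by
  have hsub : ∀ S ∈ (range N).powersetCard a, ∀ T ∈ S.powerset, T ⊆ range N := fun S hS T hT =>
    (mem_powerset.mp hT).trans (mem_powersetCard.mp hS).1
  calc ∫ w, occupancy N w h a ∂μ
      = ∑ S ∈ (range N).powersetCard a, ∑ T ∈ S.powerset,
          (-1) ^ (a - T.card) * blockMoment μ T.card h := by
        simp only [occupancy]
        rw [integral_finsetSum _ fun S hS => integrable_finsetSum _ fun T hT =>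
          (hw.integrable_sum_pow (hsub S hS T hT) h).const_mul _]
        refine sum_congr rfl fun S hS => ?_
        rw [integral_finsetSum _ fun T hT => (hw.integrable_sum_pow (hsub S hS T hT) h).const_mul _]
        refine sum_congr rfl fun T hT => ?_
        rw [integral_const_mul, hw.integral_sum_pow (hsub S hS T hT)]
    _ = ∑ S ∈ (range N).powersetCard a,
          ∑ t ∈ range (a + 1), (-1) ^ (a - t) * a.choose t * blockMoment μ t h := by
        refine sum_congr rfl fun S hS => ?_
        rw [sum_powerset_apply_card (fun t => (-1 : ℝ) ^ (a - t) * blockMoment μ t h),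
          (mem_powersetCard.mp hS).2]
        simp only [nsmul_eq_mul]
        ring_nf
    _ = _ := by rw [sum_const, card_powersetCard, card_range, nsmul_eq_mul]

lemma ae_selProb_eq (hw : IsWeights N μ) {k : ℕ} (hk : k ≤ N) :
    ∀ᵐ w ∂μ, ∑ i ∈ range k, w i ∈ Set.Icc 0 1 ∧
      selProb N s k w = (1 - s) * (∑ i ∈ range k, w i) / (1 - s * ∑ i ∈ range k, w i) := by
  filter_upwards [hw.2.1, hw.ae_sum_mem_Icc (range_subset_range.mpr hk)] with w ⟨_, _, hsum⟩ hW
  exact ⟨hW, selProb_eq hk hsum⟩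

theorem hasSum_negbinom_mul_blockMoment (hw : IsWeights N μ) (hs0 : 0 < s) (hs1 : s < 1)
    {k n : ℕ} (hk : k ≤ N) (hn : 1 ≤ n) :
    HasSum (fun h => negbinom s n h * blockMoment μ k h) (∫ w, selProb N s k w ^ n ∂μ) := by
  have := hw.1
  have hnb := negbinom_nonneg hs0.le hs1.le n
  simp_rw [blockMoment, ← integral_const_mul]
  refine hasSum_integral_of_dominated_convergence (fun h _ => negbinom s n h)
    (fun h => by fun_prop) (fun h => ?_)
    (ae_of_all _ fun _ => (hasSum_negbinom (abs_lt.mpr ⟨by linarith, hs1⟩) hn).summable)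
    (integrable_const _) ?_
  · filter_upwards [hw.ae_selProb_eq (s := s) hk] with w ⟨⟨h0, h1⟩, _⟩
    rw [norm_mul, Real.norm_of_nonneg (hnb h), Real.norm_of_nonneg (pow_nonneg h0 h)]
    exact mul_le_of_le_one_right (hnb h) (pow_le_one₀ h0 h1)
  · filter_upwards [hw.ae_selProb_eq (s := s) hk] with w ⟨⟨h0, h1⟩, hsel⟩
    rw [hsel]
    refine hasSum_negbinom_mul_pow ?_ hn
    rw [Real.norm_of_nonneg (mul_nonneg hs0.le h0)]
    nlinarith

lemma sum_canningsStep_mul_subsetProb (hw : IsWeights N μ) (hs0 : 0 < s) (hs1 : s < 1)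
    {k n : ℕ} (hk : k ≤ N) (hn : n ≤ N) :
    ∑ j ∈ range (N + 1), canningsStep N s μ k j * subsetProb N j n =
      ∫ w, selProb N s k w ^ n ∂μ := by
  have := hw.1
  have hint : ∀ j, Integrable (fun w =>
      (N.choose j : ℝ) * selProb N s k w ^ j * (1 - selProb N s k w) ^ (N - j)) μ := by
    intro j
    refine .of_bound (by unfold selProb; fun_prop) (N.choose j) ?_
    filter_upwards [hw.ae_selProb_eq (s := s) hk] with w ⟨⟨h0, h1⟩, hsel⟩
    obtain ⟨hp0, hp1⟩ := hsel ▸ one_sub_mul_div_one_sub_mul_mem_Icc hs0 hs1 h0 h1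
    have hq0 : 0 ≤ 1 - selProb N s k w := by linarith
    rw [Real.norm_of_nonneg (by positivity)]
    calc (N.choose j : ℝ) * selProb N s k w ^ j * (1 - selProb N s k w) ^ (N - j)
        ≤ N.choose j * 1 * 1 := by gcongr <;> apply pow_le_one₀ <;> linarith
      _ = N.choose j := by ring
  calc ∑ j ∈ range (N + 1), canningsStep N s μ k j * subsetProb N j n
      = ∑ j ∈ range (N + 1), ∫ w, (N.choose j : ℝ) * selProb N s k w ^ j *
          (1 - selProb N s k w) ^ (N - j) * subsetProb N j n ∂μ := by
        simp only [canningsStep, integral_mul_const]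
    _ = ∫ w, selProb N s k w ^ n ∂μ := by
        rw [← integral_finsetSum _ fun j _ => (hint j).mul_const _]
        simp only [sum_choose_mul_pow_mul_subsetProb _ hn]

lemma caspStep_eq (hw : IsWeights N μ) (hs0 : 0 < s) (hs1 : s < 1) {n a : ℕ} (hn : 1 ≤ n)
    (ha : a ≤ N) :
    caspStep N s μ n a = N.choose a *
      ∑ t ∈ range (a + 1), (-1) ^ (a - t) * a.choose t * ∫ w, selProb N s t w ^ n ∂μ := by
  have hterm : ∀ t ∈ range (a + 1), HasSum
      (fun h => N.choose a * ((-1) ^ (a - t) * a.choose t) * (negbinom s n h * blockMoment μ t h))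
      (N.choose a * ((-1) ^ (a - t) * a.choose t) * ∫ w, selProb N s t w ^ n ∂μ) :=
    fun t ht => (hw.hasSum_negbinom_mul_blockMoment hs0 hs1
      ((mem_range_succ_iff.mp ht).trans ha) hn).mul_left _
  rw [caspStep, mul_sum]
  refine HasSum.tsum_eq ?_
  convert hasSum_sum hterm using 1
  · ext h
    rw [hw.integral_occupancy, mul_sum, mul_sum]
    exact sum_congr rfl fun t _ => by ring
  · exact sum_congr rfl fun t _ => by ring

lemma sum_caspStep_mul_subsetProb (hw : IsWeights N μ) (hs0 : 0 < s) (hs1 : s < 1)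
    {k n : ℕ} (hk : k ≤ N) (hn : 1 ≤ n) :
    ∑ a ∈ range (N + 1), caspStep N s μ n a * subsetProb N k a =
      ∫ w, selProb N s k w ^ n ∂μ := by
  calc ∑ a ∈ range (N + 1), caspStep N s μ n a * subsetProb N k a
      = ∑ a ∈ range (N + 1), (k.choose a : ℝ) *
          ∑ t ∈ range (a + 1), (-1) ^ (a - t) * a.choose t * ∫ w, selProb N s t w ^ n ∂μ :=
        sum_congr rfl fun a ha => by
          rw [hw.caspStep_eq hs0 hs1 hn (mem_range_succ_iff.mp ha), mul_right_comm,
            choose_mul_subsetProb k (mem_range_succ_iff.mp ha)]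
    _ = ∫ w, selProb N s k w ^ n ∂μ :=
        sum_choose_mul_sum_neg_one_pow_mul_choose (fun t => ∫ w, selProb N s t w ^ n ∂μ) hk

theorem canningsStep_caspStep_duality (hw : IsWeights N μ) (hs0 : 0 < s) (hs1 : s < 1)
    {k n : ℕ} (hk : k ≤ N) (hn1 : 1 ≤ n) (hnN : n ≤ N) :
    ∑ j ∈ range (N + 1), canningsStep N s μ k j * subsetProb N j n =
      ∑ a ∈ range (N + 1), caspStep N s μ n a * subsetProb N k a := by
  rw [hw.sum_canningsStep_mul_subsetProb hs0 hs1 hk hnN,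
    hw.sum_caspStep_mul_subsetProb hs0 hs1 hk hn1]

end IsWeights

theorem cannings_sampling_duality_general
    (N : ℕ) (μ : Measure (ℕ → ℝ)) (s : ℝ)
    (hw : IsWeights N μ) (hs0 : 0 < s) (hs1 : s < 1)
    (g k n : ℕ) (hkN : k ≤ N) (hn1 : 1 ≤ n) (hnN : n ≤ N) :
    ∑ j ∈ Finset.range (N + 1),
        canningsProb N s μ g k j *
          ((j.descFactorial n : ℝ) / (N.descFactorial n : ℝ)) =
      ∑ a ∈ Finset.range (N + 1),
        caspProb N s μ g n a *
          ((k.descFactorial a : ℝ) / (N.descFactorial a : ℝ)) := by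
  rw [canningsProb_eq_kernelIter, caspProb_eq_kernelIter]
  refine kernelIter_duality (D := subsetProb N) (S := Set.Icc 1 N) (fun n hn => hn.2)
    (fun n hn a _ ha => ?_) (fun k hk n hn => hw.canningsStep_caspStep_duality hs0 hs1 hk hn.1 hn.2)
    g hkN ⟨hn1, hnN⟩
  rw [show a = 0 by simp_all, caspStep_zero_right N s μ hn.1]

/-- **Sampling duality** (Theorem 3.1 / formula (3.2)): for every `g ≥ 0` and
`k, n ∈ {1,…,N}`,
`E[ K_g (K_g−1) ⋯ (K_g−n+1) / (N (N−1) ⋯ (N−n+1)) | K_0 = k ]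
  = E[ k (k−1) ⋯ (k−A_g+1) / (N (N−1) ⋯ (N−A_g+1)) | A_0 = n ]`,
which is the probability that a uniform size-`n` sample lies in `{1,…,K_g}`,
resp. that a uniform set of `A_g` potential ancestors lies in `{1,…,k}`. -/
theorem cannings_sampling_duality
    (N : ℕ) (hN : 1 ≤ N) (μ : Measure (ℕ → ℝ)) (s : ℝ)
    (hw : IsWeights N μ) (hs0 : 0 < s) (hs1 : s < 1)
    (g k n : ℕ) (hk1 : 1 ≤ k) (hkN : k ≤ N) (hn1 : 1 ≤ n) (hnN : n ≤ N) :
    ∑ j ∈ Finset.range (N + 1),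
        canningsProb N s μ g k j *
          ((j.descFactorial n : ℝ) / (N.descFactorial n : ℝ)) =
      ∑ a ∈ Finset.range (N + 1),
        caspProb N s μ g n a *
          ((k.descFactorial a : ℝ) / (N.descFactorial a : ℝ)) :=
  cannings_sampling_duality_general N μ s hw hs0 hs1 g k n hkN hn1 hnN
end
end

section
/- Extremality of uniform weights for the number of distinct values (Lemma 5.3): for natural numbers N and k, let Z_1, Z_2, … be i.i.d. {1,…,N}-valued random variables with w_i := P(Z_1 = i) for i ∈ {1,…,N}. Then for each k ∈ ℕ the random variable C_k := |{Z_1,…,Z_k}| (the number of distinct values among Z_1,…,Z_k) is stochastically largest when w_1 = ⋯ = w_N = 1/N; that is, for every probability vector (w_1,…,w_N) and every ℓ, P(|{Z_1,…,Z_k}| ≥ ℓ) ≤ P(|{U_1,…,U_k}| ≥ ℓ), where U_1, U_2, … are i.i.d. uniform on {1,…,N}. -/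
open Finset

noncomputable section

namespace UniformExtremal

/-! ### Auxiliary algebraic lemmas -/

lemma sum_powerset_pow {α : Type*} [DecidableEq α] (I : Finset α) (x y : ℝ) :
    ∑ E ∈ I.powerset, x ^ (I.card - E.card) * y ^ E.card = (x + y) ^ I.card := by
  have h := Finset.prod_add (fun _ : α => y) (fun _ => x) I
  simp only [Finset.prod_const] at h
  rw [show x + y = y + x by ring, h]
  refine Finset.sum_congr rfl fun E hE => ?_
  rw [Finset.card_sdiff_of_subset (Finset.mem_powerset.mp hE)]
  ring

lemma pow_pair {x y x' y' : ℝ} (hy : 0 ≤ y) (h1 : y ≤ y') (h2 : y' ≤ x')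
    (h3 : x' ≤ x) (hs : x + y = x' + y') (m : ℕ) :
    x' ^ m + y' ^ m ≤ x ^ m + y ^ m := by
  have hy' : (0:ℝ) ≤ y' := le_trans hy h1
  have hx' : (0:ℝ) ≤ x' := le_trans hy' h2
  have hx : (0:ℝ) ≤ x := le_trans hx' h3
  have hd : x - x' = y' - y := by linarith
  have key : y' ^ m - y ^ m ≤ x ^ m - x' ^ m := by
    rw [← geom_sum₂_mul, ← geom_sum₂_mul, hd]
    apply mul_le_mul_of_nonneg_right _ (by linarith)
    apply Finset.sum_le_sum
    intro i _
    exact mul_le_mul (pow_le_pow_left₀ hy' (le_trans h2 h3) i)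
      (pow_le_pow_left₀ hy (le_trans h1 h2) _) (pow_nonneg hy _) (pow_nonneg hx _)
  linarith

/-- the inner value of the fiber sum over a merged configuration. -/
noncomputable def Aval (ℓ c m : ℕ) (x y : ℝ) : ℝ :=
  (if ℓ ≤ c then (x + y) ^ m else 0) +
    (if ℓ = c + 1 then (x + y) ^ m - x ^ m - y ^ m else 0)

lemma Aval_mono {ℓ c m : ℕ} {x y x' y' : ℝ} (hy : 0 ≤ y) (h1 : y ≤ y') (h2 : y' ≤ x')
    (h3 : x' ≤ x) (hs : x + y = x' + y') :
    Aval ℓ c m x y ≤ Aval ℓ c m x' y' := by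
  have hp := pow_pair hy h1 h2 h3 hs m
  unfold Aval
  rw [hs]
  split_ifs <;> linarith

lemma inner_eval (ℓ c : ℕ) {β : Type*} [DecidableEq β] (I : Finset β) (hI : I.Nonempty)
    (x y : ℝ) :
    ∑ E ∈ I.powerset, (x ^ (I.card - E.card) * y ^ E.card) *
        (if ℓ + 1 ≤ c + (if E = I then 0 else 1) + (if E = ∅ then 0 else 1) then (1:ℝ) else 0)
      = Aval ℓ c I.card x y := by
  have hIne : I ≠ ∅ := hI.ne_empty
  rcases show ℓ ≤ c ∨ ℓ = c + 1 ∨ c + 2 ≤ ℓ by omega with h | h | h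
  · have hχ : ∀ E ∈ I.powerset,
        (x ^ (I.card - E.card) * y ^ E.card) *
          (if ℓ + 1 ≤ c + (if E = I then 0 else 1) + (if E = ∅ then 0 else 1) then (1:ℝ) else 0)
        = x ^ (I.card - E.card) * y ^ E.card := by
      intro E _
      have : ℓ + 1 ≤ c + (if E = I then 0 else 1) + (if E = ∅ then 0 else 1) := by
        by_cases hEI : E = I
        · subst hEI; simp [hIne]; omega
        · simp [hEI]; omega
      rw [if_pos this, mul_one]
    rw [Finset.sum_congr rfl hχ, sum_powerset_pow]
    unfold Aval
    rw [if_pos h, if_neg (by omega)]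
    ring
  · have hχ : ∀ E ∈ I.powerset,
        (x ^ (I.card - E.card) * y ^ E.card) *
          (if ℓ + 1 ≤ c + (if E = I then 0 else 1) + (if E = ∅ then 0 else 1) then (1:ℝ) else 0)
        = x ^ (I.card - E.card) * y ^ E.card
          - (if E = ∅ then x ^ (I.card - E.card) * y ^ E.card else 0)
          - (if E = I then x ^ (I.card - E.card) * y ^ E.card else 0) := by
      intro E _
      by_cases hE0 : E = ∅
      · have hEI : E ≠ I := by rw [hE0]; exact fun hh => hIne hh.symm
        rw [if_neg (by rw [if_neg hEI, if_pos hE0]; omega), if_pos hE0, if_neg hEI]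
        ring
      · by_cases hEI : E = I
        · rw [if_neg (by rw [if_pos hEI, if_neg hE0]; omega), if_neg hE0, if_pos hEI]
          ring
        · rw [if_pos (by rw [if_neg hEI, if_neg hE0]; omega), if_neg hE0, if_neg hEI]
          ring
    rw [Finset.sum_congr rfl hχ]
    rw [Finset.sum_sub_distrib, Finset.sum_sub_distrib, sum_powerset_pow]
    rw [Finset.sum_ite_eq' I.powerset (∅ : Finset β), Finset.sum_ite_eq' I.powerset I]
    rw [if_pos (Finset.mem_powerset.mpr (Finset.empty_subset I)),
      if_pos (Finset.mem_powerset.mpr le_rfl)]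
    unfold Aval
    rw [if_neg (by omega), if_pos h]
    simp
  · have hχ : ∀ E ∈ I.powerset,
        (x ^ (I.card - E.card) * y ^ E.card) *
          (if ℓ + 1 ≤ c + (if E = I then 0 else 1) + (if E = ∅ then 0 else 1) then (1:ℝ) else 0)
        = 0 := by
      intro E _
      rw [if_neg (by split_ifs <;> omega), mul_zero]
    rw [Finset.sum_congr rfl hχ, Finset.sum_const, smul_zero]
    unfold Aval
    rw [if_neg (by omega), if_neg (by omega), add_zero]

/-! ### The sum as an explicit function of two selected weights -/

noncomputable def Fval (N k ℓ : ℕ) (w : Fin N → ℝ) : ℝ :=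
  ∑ z : Fin k → Fin N, (∏ i, w (z i)) *
    (if ℓ ≤ (Finset.univ.image z).card then 1 else 0)

variable {N k : ℕ}

def mrg (a b : Fin N) (z : Fin k → Fin N) : Fin k → Fin N :=
  fun i => if z i = b then a else z i

def Eset (b : Fin N) (z : Fin k → Fin N) : Finset (Fin k) :=
  Finset.univ.filter fun i => z i = b

def psi (b : Fin N) (p : (Fin k → Fin N) × Finset (Fin k)) : Fin k → Fin N :=
  fun i => if i ∈ p.2 then b else p.1 i

lemma psi_mrg (a b : Fin N) (z : Fin k → Fin N) : psi b (mrg a b z, Eset b z) = z := by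
  funext i
  by_cases h : z i = b <;> simp [psi, mrg, Eset, h]

lemma card_image_psi (a b : Fin N) (hab : a ≠ b) (t : Fin k → Fin N)
    (hb : ∀ i, t i ≠ b) (E : Finset (Fin k)) (hE : ∀ i ∈ E, t i = a)
    (hI : (univ.filter fun i => t i = a) ≠ ∅) :
    (univ.image (psi b (t, E))).card + 1
      = (univ.image t).card + (if E = univ.filter (fun i => t i = a) then 0 else 1)
          + (if E = ∅ then 0 else 1) := by
  have hps : psi b (t, E) = fun i => if i ∈ E then b else t i := rfl
  rw [hps]
  obtain ⟨i0, hi0⟩ := Finset.nonempty_iff_ne_empty.mpr hI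
  rw [Finset.mem_filter] at hi0
  have ha : a ∈ univ.image t := Finset.mem_image.mpr ⟨i0, Finset.mem_univ _, hi0.2⟩
  have hbim : b ∉ univ.image t := by
    intro hmem
    obtain ⟨j, _, hj⟩ := Finset.mem_image.mp hmem
    exact hb j hj
  have hc : 1 ≤ (univ.image t).card := Finset.card_pos.mpr ⟨a, ha⟩
  by_cases hE0 : E = ∅
  · subst hE0
    have h00 : (fun i => if i ∈ (∅ : Finset (Fin k)) then b else t i) = t := by
      funext i; simp
    rw [h00, if_neg (fun hh => hI hh.symm), if_pos rfl]
  · by_cases hEI : E = univ.filter fun i => t i = a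
    · have himg : (univ.image fun i => if i ∈ E then b else t i)
          = insert b ((univ.image t).erase a) := by
        ext u
        simp only [Finset.mem_image, Finset.mem_univ, true_and, Finset.mem_insert,
          Finset.mem_erase]
        constructor
        · rintro ⟨i, rfl⟩
          by_cases hi : i ∈ E
          · simp [hi]
          · right
            have hia : t i ≠ a := by
              intro hiA
              exact hi (by rw [hEI]; exact Finset.mem_filter.mpr ⟨Finset.mem_univ _, hiA⟩)
            simp [hi, hia]
        · rintro (rfl | ⟨hua, i, rfl⟩)
          · refine ⟨i0, ?_⟩
            have : i0 ∈ E := by rw [hEI]; exact Finset.mem_filter.mpr ⟨Finset.mem_univ _, hi0.2⟩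
            simp [this]
          · refine ⟨i, ?_⟩
            have : i ∉ E := fun hi => hua (hE i hi)
            simp [this]
      rw [himg, Finset.card_insert_of_notMem (fun hmem => hbim (Finset.mem_of_mem_erase hmem)),
        Finset.card_erase_of_mem ha, if_pos hEI, if_neg hE0]
      omega
    · have hEsub : E ⊆ univ.filter fun i => t i = a := fun i hi =>
        Finset.mem_filter.mpr ⟨Finset.mem_univ _, hE i hi⟩
      obtain ⟨j, hjI, hjE⟩ := Finset.exists_of_ssubset (lt_of_le_of_ne hEsub hEI)
      have hja : t j = a := (Finset.mem_filter.mp hjI).2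
      obtain ⟨e0, he0⟩ := Finset.nonempty_iff_ne_empty.mpr hE0
      have himg : (univ.image fun i => if i ∈ E then b else t i)
          = insert b (univ.image t) := by
        ext u
        simp only [Finset.mem_image, Finset.mem_univ, true_and, Finset.mem_insert]
        constructor
        · rintro ⟨i, rfl⟩
          by_cases hi : i ∈ E
          · simp [hi]
          · right; simp [hi]
        · rintro (rfl | ⟨i, rfl⟩)
          · exact ⟨e0, by simp [he0]⟩
          · by_cases hi : i ∈ E
            · refine ⟨j, ?_⟩
              simp [hjE, hja, hE i hi]
            · exact ⟨i, by simp [hi]⟩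
      rw [himg, Finset.card_insert_of_notMem hbim, if_neg hEI, if_neg hE0]

lemma prod_psi (a b : Fin N) (hab : a ≠ b) (w : Fin N → ℝ) (x y : ℝ)
    (t : Fin k → Fin N) (hb : ∀ i, t i ≠ b) (E : Finset (Fin k)) (hE : ∀ i ∈ E, t i = a) :
    (∏ i, (fun j => if j = b then y else if j = a then x else w j) (psi b (t, E) i))
      = (∏ i ∈ univ.filter (fun i => ¬ t i = a), w (t i)) *
          (x ^ ((univ.filter fun i => t i = a).card - E.card) * y ^ E.card) := by
  simp only [psi]
  have hEsub : E ⊆ univ.filter fun i => t i = a := fun i hi =>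
    Finset.mem_filter.mpr ⟨Finset.mem_univ _, hE i hi⟩
  rw [← Finset.prod_filter_mul_prod_filter_not univ (fun i => t i = a)]
  have h2 : ∀ i ∈ univ.filter (fun i => ¬ t i = a),
      (fun j => if j = b then y else if j = a then x else w j)
        (if i ∈ ((t, E).2 : Finset (Fin k)) then b else (t, E).1 i) = w (t i) := by
    intro i hi
    rw [Finset.mem_filter] at hi
    have hiE : i ∉ E := fun hh => hi.2 (hE i hh)
    simp only [if_neg hiE]
    rw [if_neg (hb i), if_neg hi.2]
  rw [Finset.prod_congr rfl h2]
  rw [← Finset.prod_sdiff hEsub]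
  have h3 : ∀ i ∈ (univ.filter fun i => t i = a) \ E,
      (fun j => if j = b then y else if j = a then x else w j)
        (if i ∈ ((t, E).2 : Finset (Fin k)) then b else (t, E).1 i) = x := by
    intro i hi
    rw [Finset.mem_sdiff, Finset.mem_filter] at hi
    simp only [if_neg hi.2]
    rw [if_neg (by rw [hi.1.2]; exact Ne.symm (fun hh => hab hh.symm)), if_pos hi.1.2]
  have h4 : ∀ i ∈ E,
      (fun j => if j = b then y else if j = a then x else w j)
        (if i ∈ ((t, E).2 : Finset (Fin k)) then b else (t, E).1 i) = y := by
    intro i hi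
    simp [hi]
  rw [Finset.prod_congr rfl h3, Finset.prod_congr rfl h4, Finset.prod_const,
    Finset.prod_const, Finset.card_sdiff_of_subset hEsub]
  ring

lemma step1 (N k ℓ : ℕ) (a b : Fin N) (hab : a ≠ b) (v : Fin N → ℝ) :
    Fval N k ℓ v
      = ∑ p ∈ Finset.univ.filter
            (fun p : (Fin k → Fin N) × Finset (Fin k) =>
              (∀ i, p.1 i ≠ b) ∧ p.2 ⊆ Finset.univ.filter fun i => p.1 i = a),
          (∏ i, v (psi b p i)) *
            (if ℓ ≤ (Finset.univ.image (psi b p)).card then (1:ℝ) else 0) := by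
  classical
  rw [Fval]
  refine Finset.sum_nbij' (i := fun z => (mrg a b z, Eset b z)) (j := psi b)
    ?_ ?_ ?_ ?_ ?_
  · intro z _
    rw [Finset.mem_filter]
    refine ⟨Finset.mem_univ _, fun i => ?_, fun i hi => ?_⟩
    · by_cases h : z i = b
      · simp [mrg, h]
        exact hab
      · simp [mrg, h]
    · simp only [Eset, Finset.mem_filter] at hi
      simp [mrg, hi.2]
  · intro p _
    exact Finset.mem_univ _
  · intro z _
    exact psi_mrg a b z
  · intro p hp
    rw [Finset.mem_filter] at hp
    obtain ⟨-, hb, hsub⟩ := hp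
    obtain ⟨t, E⟩ := p
    rw [Prod.mk.injEq]
    constructor
    · funext i
      by_cases h : i ∈ E
      · have : t i = a := (Finset.mem_filter.mp (hsub h)).2
        simp [mrg, psi, h, this]
      · simp [mrg, psi, h, hb i]
    · ext i
      simp only [Eset, psi, Finset.mem_filter, Finset.mem_univ, true_and]
      constructor
      · intro hi
        by_cases h : i ∈ E
        · exact h
        · rw [if_neg h] at hi
          exact absurd hi (hb i)
      · intro h
        rw [if_pos h]
  · intro z _
    rw [psi_mrg a b z]

lemma F_eval (N k ℓ : ℕ) (a b : Fin N) (hab : a ≠ b) (w : Fin N → ℝ) (x y : ℝ) :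
    Fval N k ℓ (fun j => if j = b then y else if j = a then x else w j)
      = ∑ t : Fin k → Fin N,
          if ∀ i, t i ≠ b then
            (∏ i ∈ univ.filter (fun i => ¬ t i = a), w (t i)) *
              (if (univ.filter fun i => t i = a) = ∅ then
                  (if ℓ ≤ (univ.image t).card then (1:ℝ) else 0)
                else Aval ℓ (univ.image t).card ((univ.filter fun i => t i = a).card) x y)
          else 0 := by
  classical
  rw [step1 N k ℓ a b hab]
  rw [Finset.sum_filter, Fintype.sum_prod_type]
  refine Finset.sum_congr rfl fun t _ => ?_
  by_cases hbt : ∀ i, t i ≠ b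
  · rw [if_pos hbt]
    have e0 : (∀ i, t i ≠ b) = True := eq_true hbt
    simp only [e0, true_and]
    rw [← Finset.sum_filter]
    have hpow : (Finset.univ.filter fun E : Finset (Fin k) =>
        E ⊆ Finset.univ.filter fun i => t i = a)
        = (Finset.univ.filter fun i => t i = a).powerset := by
      ext E
      simp [Finset.mem_powerset]
    rw [hpow]
    by_cases hI : (Finset.univ.filter fun i => t i = a) = ∅
    · rw [if_pos hI, hI, Finset.powerset_empty, Finset.sum_singleton]
      rw [prod_psi a b hab w x y t hbt ∅ (by simp)]
      have hps : psi b (t, (∅ : Finset (Fin k))) = t := by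
        funext i; simp [psi]
      rw [hps, hI]
      simp
    · rw [if_neg hI]
      have hIne : (Finset.univ.filter fun i => t i = a).Nonempty :=
        Finset.nonempty_iff_ne_empty.mpr hI
      have key : ∀ E ∈ (Finset.univ.filter fun i => t i = a).powerset,
          (∏ i, (fun j => if j = b then y else if j = a then x else w j) (psi b (t, E) i)) *
              (if ℓ ≤ (Finset.univ.image (psi b (t, E))).card then (1:ℝ) else 0)
            = (∏ i ∈ univ.filter (fun i => ¬ t i = a), w (t i)) *
                ((x ^ ((univ.filter fun i => t i = a).card - E.card) * y ^ E.card) *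
                  (if ℓ + 1 ≤ (univ.image t).card
                      + (if E = univ.filter (fun i => t i = a) then 0 else 1)
                      + (if E = ∅ then 0 else 1) then (1:ℝ) else 0)) := by
        intro E hE
        have hEa : ∀ i ∈ E, t i = a := fun i hi =>
          (Finset.mem_filter.mp (Finset.mem_powerset.mp hE hi)).2
        rw [prod_psi a b hab w x y t hbt E hEa]
        have hcard := card_image_psi a b hab t hbt E hEa hI
        have hiff : (ℓ ≤ (Finset.univ.image (psi b (t, E))).card)
            ↔ (ℓ + 1 ≤ (univ.image t).card
                + (if E = univ.filter (fun i => t i = a) then 0 else 1)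
                + (if E = ∅ then 0 else 1)) := by omega
        rw [if_congr hiff rfl rfl]
        ring
      rw [Finset.sum_congr rfl key, ← Finset.mul_sum]
      congr 1
      exact inner_eval ℓ (univ.image t).card _ hIne x y
  · rw [if_neg hbt]
    have e0 : (∀ i, t i ≠ b) = False := eq_false hbt
    simp only [e0, false_and, if_false]
    exact Finset.sum_const_zero

/-! ### The transfer (smoothing) inequality -/

lemma transfer (N k ℓ : ℕ) (a b : Fin N) (hab : a ≠ b) (w : Fin N → ℝ)
    (hw : ∀ i, 0 ≤ w i) {x y x' y' : ℝ}
    (hy : 0 ≤ y) (h1 : y ≤ y') (h2 : y' ≤ x') (h3 : x' ≤ x) (hs : x + y = x' + y') :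
    Fval N k ℓ (fun j => if j = b then y else if j = a then x else w j)
      ≤ Fval N k ℓ (fun j => if j = b then y' else if j = a then x' else w j) := by
  rw [F_eval N k ℓ a b hab w x y, F_eval N k ℓ a b hab w x' y']
  apply Finset.sum_le_sum
  intro t _
  by_cases hbt : ∀ i, t i ≠ b
  · rw [if_pos hbt, if_pos hbt]
    by_cases hI : (Finset.univ.filter fun i => t i = a) = ∅
    · rw [if_pos hI, if_pos hI]
    · rw [if_neg hI, if_neg hI]
      apply mul_le_mul_of_nonneg_left _ (Finset.prod_nonneg fun i _ => hw _)
      exact Aval_mono hy h1 h2 h3 hs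
  · rw [if_neg hbt, if_neg hbt]

/-! ### Induction to the uniform vector -/

lemma main_aux (N k ℓ : ℕ) (hN : 1 ≤ N) :
    ∀ n (w : Fin N → ℝ), (Finset.univ.filter fun i => w i ≠ 1 / N).card ≤ n →
      (∀ i, 0 ≤ w i) → (∑ i, w i = 1) →
      Fval N k ℓ w ≤ Fval N k ℓ (fun _ => 1 / N) := by
  intro n
  induction n with
  | zero =>
    intro w hcard _ _
    have : ∀ i, w i = 1 / N := by
      intro i
      by_contra hne
      have : i ∈ Finset.univ.filter fun i => w i ≠ 1 / N :=
        Finset.mem_filter.mpr ⟨Finset.mem_univ _, hne⟩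
      have := Finset.card_pos.mpr ⟨i, this⟩
      omega
    exact le_of_eq (by rw [funext this])
  | succ n ih =>
    intro w hcard hw0 hw1
    classical
    by_cases h0 : (Finset.univ.filter fun i => w i ≠ 1 / N) = ∅
    · rw [Finset.filter_eq_empty_iff] at h0
      have : ∀ i, w i = 1 / N := fun i => not_not.mp (h0 (Finset.mem_univ i))
      exact le_of_eq (by rw [funext this])
    · have hNr : (0:ℝ) < N := by positivity
      have hsum_unif : ∑ _i : Fin N, (1:ℝ) / N = 1 := by
        rw [Finset.sum_const, Finset.card_univ, Fintype.card_fin, nsmul_eq_mul]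
        field_simp
      obtain ⟨j, hj⟩ := Finset.nonempty_iff_ne_empty.mpr h0
      have hjne : w j ≠ 1 / N := (Finset.mem_filter.mp hj).2
      have hex_lt : ∃ i, w i < 1 / N := by
        by_contra hc
        push_neg at hc
        rcases lt_or_gt_of_ne hjne with hlt | hgt
        · exact absurd hlt (not_lt.mpr (hc j))
        · have : (1:ℝ) < ∑ i, w i := by
            rw [← hsum_unif]
            exact Finset.sum_lt_sum (fun i _ => hc i) ⟨j, Finset.mem_univ _, hgt⟩
          linarith
      have hex_gt : ∃ i, 1 / N < w i := by
        by_contra hc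
        push_neg at hc
        rcases lt_or_gt_of_ne hjne with hlt | hgt
        · have : ∑ i, w i < (1:ℝ) := by
            conv_rhs => rw [← hsum_unif]
            exact Finset.sum_lt_sum (fun i _ => hc i) ⟨j, Finset.mem_univ _, hlt⟩
          linarith
        · exact absurd hgt (not_lt.mpr (hc j))
      obtain ⟨a0, ha0⟩ := hex_gt
      obtain ⟨b0, hb0⟩ := hex_lt
      have hab : a0 ≠ b0 := fun h => by rw [h] at ha0; linarith
      have hfix : (fun j => if j = b0 then w b0 else if j = a0 then w a0 else w j) = w := by
        funext i
        by_cases h : i = b0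
        · simp [h]
        · by_cases h' : i = a0
          · subst h'
            rw [if_neg hab, if_pos rfl]
          · rw [if_neg h, if_neg h']
      have hwa : w a0 ≠ 1 / N := ne_of_gt ha0
      have hwb : w b0 ≠ 1 / N := ne_of_lt hb0
      by_cases hcase : 1 / (N:ℝ) ≤ w a0 + w b0 - 1 / N
      · -- move b0 to 1/N
        set w' : Fin N → ℝ :=
          fun j => if j = b0 then 1 / N else if j = a0 then w a0 + w b0 - 1 / N else w j with hw'
        have hle : Fval N k ℓ w ≤ Fval N k ℓ w' := by
          rw [← hfix]
          exact transfer N k ℓ a0 b0 hab w hw0 (hw0 b0) (le_of_lt hb0) hcase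
            (by linarith) (by ring)
        refine le_trans hle (ih w' ?_ ?_ ?_)
        · have hsub : (Finset.univ.filter fun i => w' i ≠ 1 / N)
              ⊆ (Finset.univ.filter fun i => w i ≠ 1 / N).erase b0 := by
            intro i hi
            rw [Finset.mem_filter] at hi
            rw [Finset.mem_erase, Finset.mem_filter]
            by_cases h : i = b0
            · exact absurd (by rw [hw']; simp [h]) hi.2
            · refine ⟨h, Finset.mem_univ _, ?_⟩
              by_cases h' : i = a0
              · rw [h']; exact hwa
              · have : w' i = w i := by rw [hw']; simp [h, h']
                rw [← this]; exact hi.2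
          have hbmem : b0 ∈ Finset.univ.filter fun i => w i ≠ 1 / N :=
            Finset.mem_filter.mpr ⟨Finset.mem_univ _, hwb⟩
          have := Finset.card_le_card hsub
          rw [Finset.card_erase_of_mem hbmem] at this
          omega
        · intro i
          have hv : w' i = if i = b0 then 1 / (N:ℝ) else if i = a0 then w a0 + w b0 - 1 / N
              else w i := rfl
          rw [hv]
          split_ifs
          · positivity
          · linarith [show (0:ℝ) ≤ 1 / N by positivity]
          · exact hw0 i
        · have hdecomp : ∀ i, w' i = w i + ((if i = a0 then w b0 - 1 / N else 0)
              + (if i = b0 then 1 / N - w b0 else 0)) := by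
            intro i
            have hv : w' i = if i = b0 then 1 / (N:ℝ) else if i = a0 then w a0 + w b0 - 1 / N
                else w i := rfl
            rw [hv]
            by_cases h : i = b0
            · subst h
              rw [if_pos rfl, if_neg (fun hh => hab hh.symm), if_pos rfl]
              ring
            · by_cases h' : i = a0
              · subst h'
                rw [if_neg h, if_pos rfl, if_pos rfl, if_neg h]
                ring
              · rw [if_neg h, if_neg h', if_neg h', if_neg h]
                ring
          rw [Finset.sum_congr rfl fun i _ => hdecomp i, Finset.sum_add_distrib,
            Finset.sum_add_distrib, hw1, Finset.sum_ite_eq' Finset.univ a0,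
            Finset.sum_ite_eq' Finset.univ b0, if_pos (Finset.mem_univ _),
            if_pos (Finset.mem_univ _)]
          ring
      · -- move a0 to 1/N
        push_neg at hcase
        set w' : Fin N → ℝ :=
          fun j => if j = b0 then w a0 + w b0 - 1 / N else if j = a0 then 1 / N else w j with hw'
        have hle : Fval N k ℓ w ≤ Fval N k ℓ w' := by
          rw [← hfix]
          exact transfer N k ℓ a0 b0 hab w hw0 (hw0 b0) (by linarith) (le_of_lt hcase)
            (le_of_lt ha0) (by ring)
        refine le_trans hle (ih w' ?_ ?_ ?_)
        · have hsub : (Finset.univ.filter fun i => w' i ≠ 1 / N)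
              ⊆ (Finset.univ.filter fun i => w i ≠ 1 / N).erase a0 := by
            intro i hi
            rw [Finset.mem_filter] at hi
            rw [Finset.mem_erase, Finset.mem_filter]
            by_cases h : i = a0
            · exact absurd (by rw [hw']; simp [h, hab]) hi.2
            · refine ⟨h, Finset.mem_univ _, ?_⟩
              by_cases h' : i = b0
              · rw [h']; exact hwb
              · have : w' i = w i := by rw [hw']; simp [h, h']
                rw [← this]; exact hi.2
          have hamem : a0 ∈ Finset.univ.filter fun i => w i ≠ 1 / N :=
            Finset.mem_filter.mpr ⟨Finset.mem_univ _, hwa⟩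
          have := Finset.card_le_card hsub
          rw [Finset.card_erase_of_mem hamem] at this
          omega
        · intro i
          have hv : w' i = if i = b0 then w a0 + w b0 - 1 / (N:ℝ) else if i = a0 then 1 / N
              else w i := rfl
          rw [hv]
          split_ifs
          · linarith [hw0 b0]
          · positivity
          · exact hw0 i
        · have hdecomp : ∀ i, w' i = w i + ((if i = a0 then 1 / N - w a0 else 0)
              + (if i = b0 then w a0 - 1 / N else 0)) := by
            intro i
            have hv : w' i = if i = b0 then w a0 + w b0 - 1 / (N:ℝ) else if i = a0 then 1 / N
                else w i := rfl
            rw [hv]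
            by_cases h : i = b0
            · subst h
              rw [if_pos rfl, if_neg (fun hh => hab hh.symm), if_pos rfl]
              ring
            · by_cases h' : i = a0
              · subst h'
                rw [if_neg h, if_pos rfl, if_pos rfl, if_neg h]
                ring
              · rw [if_neg h, if_neg h', if_neg h', if_neg h]
                ring
          rw [Finset.sum_congr rfl fun i _ => hdecomp i, Finset.sum_add_distrib,
            Finset.sum_add_distrib, hw1, Finset.sum_ite_eq' Finset.univ a0,
            Finset.sum_ite_eq' Finset.univ b0, if_pos (Finset.mem_univ _),
            if_pos (Finset.mem_univ _)]
          ring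

end UniformExtremal

/-- **Extremality of uniform weights for the number of distinct values**
(Lemma 5.3): if `Z_1, Z_2, …` are i.i.d. `{1,…,N}`-valued with `P(Z_1 = i) = w i`,
then for each `k` and each `ℓ`, the probability that `|{Z_1,…,Z_k}| ≥ ℓ` is
largest when `w` is uniform; i.e. `C_k = |{Z_1,…,Z_k}|` is stochastically largest
for `w_1 = ⋯ = w_N = 1/N`. (The probabilities are written as explicit sums over
all outcomes `z : Fin k → Fin N`.) -/
theorem uniform_weights_maximize_distinct_values
    (N k : ℕ) (hN : 1 ≤ N) (w : Fin N → ℝ)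
    (hw0 : ∀ i, 0 ≤ w i) (hw1 : ∑ i, w i = 1) (ℓ : ℕ) :
    ∑ z : Fin k → Fin N, (∏ i, w (z i)) *
        (if ℓ ≤ (Finset.univ.image z).card then 1 else 0) ≤
      ∑ z : Fin k → Fin N, (∏ _i : Fin k, (1 / N : ℝ)) *
        (if ℓ ≤ (Finset.univ.image z).card then 1 else 0) := by
  classical
  have h := UniformExtremal.main_aux N k ℓ hN
    (Finset.univ.filter fun i => w i ≠ 1 / N).card w le_rfl hw0 hw1
  simpa [UniformExtremal.Fval] using h

end
end
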